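/- arXiv:0903.3361 — 4 statements merged into one kernel-verified Lean document; each statement's English description precedes it below -/
import Mathlib

section
/- Let H be a complex Hilbert space of finite dimension d, I a bounded interval, y ∈ ℝ, r, R > 0, and γ_n := 2π|I|⁻¹ n for n ∈ ℤ. Let (ω_k)_{k∈ℤ} satisfy the gap condition inf_{k≠n} |ω_k − ω_n| > 0, let (U_k)_{k∈ℤ} be unit vectors in H, write e_k(t) := U_k e^{iω_k t}, and suppose (φ_k)_{k∈ℤ} is a bounded family in L²(I,H) biorthogonal to (e_k)_{k∈ℤ}. Let V_r, W_{r+R}, P_r, Q_{r+R}, S be as follows: V_r = span{e_k : |ω_k − y| < r}, W_{r+R} = span{U e^{iγ_n t} : |γ_n − y| < r+R, U ∈ H}, P_r and Q_{r+R} the orthogonal projections onto V_r and W_{r+R}, and S := P_r ∘ Q_{r+R} restricted to V_r. Then tr(S) = Card(Ω_r) + Σ_{|ω_k − y| < r} ((Q_{r+R} − Id) e_k, P_r φ_k)_{L²(I,H)}, where Ω_r := {ω_k : |ω_k − y| < r, k ∈ ℤ}. -/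
/-! The trace of `S` is computed in the basis `(e_k)_{|ω_k - y| < r}` of `V`, whose coordinate
functionals are `⟪φ_k, ·⟫` by biorthogonality; the diagonal entry `⟪φ_k, P Q e_k⟫ = ⟪P φ_k, Q e_k⟫`
splits as `⟪P φ_k, e_k⟫ + ⟪P φ_k, Q e_k - e_k⟫`, and `⟪P φ_k, e_k⟫ = ⟪φ_k, P e_k⟫ = ⟪φ_k, e_k⟫ = 1`.
The gap condition makes the index set finite and `k ↦ ω_k` injective, so the number of
indices is `Card Ω_r`. -/

open MeasureTheory Complex

noncomputable section

variable {H : Type*} [NormedAddCommGroup H] [InnerProductSpace ℂ H]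

lemma memℒp_expSmul (a b : ℝ) (ν : ℝ) (u : H) :
    MemLp (fun t : ℝ => Complex.exp (Complex.I * ν * t) • u) 2
      (volume.restrict (Set.Ioo a b)) := by
  have hc : Continuous fun t : ℝ => Complex.exp (Complex.I * ν * t) • u := by
    fun_prop
  refine MemLp.of_bound hc.aestronglyMeasurable ‖u‖ (Filter.Eventually.of_forall fun t => ?_)
  rw [norm_smul]
  have : ‖Complex.exp (Complex.I * ν * t)‖ = 1 := by
    rw [Complex.norm_exp]
    simp [Complex.mul_re]
  rw [this, one_mul]

/-- The element `t ↦ e^{iνt} u` of `L²((a,b), H)`. -/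
def expLp (a b : ℝ) (ν : ℝ) (u : H) : Lp H 2 (volume.restrict (Set.Ioo a b)) :=
  (memℒp_expSmul a b ν u).toLp _

section Separated

variable {ι : Type*} {ω : ι → ℝ} {δ : ℝ}

lemma iInf_abs_sub_le {k n : ι} (h : k ≠ n) :
    ⨅ p : {p : ι × ι // p.1 ≠ p.2}, |ω p.1.1 - ω p.1.2| ≤ |ω k - ω n| := by
  refine ciInf_le (f := fun p : {p : ι × ι // p.1 ≠ p.2} => |ω p.1.1 - ω p.1.2|) ?_ ⟨(k, n), h⟩
  exact ⟨0, by rintro x ⟨p, rfl⟩; positivity⟩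

variable (hδ : 0 < δ) (hsep : ∀ k n, k ≠ n → δ ≤ |ω k - ω n|)
include hδ hsep

lemma injective_of_separated : Function.Injective ω := by
  intro k n h
  by_contra hkn
  have := hsep k n hkn
  rw [h, sub_self, abs_zero] at this
  linarith

lemma injective_floor_div_of_separated : Function.Injective fun k => ⌊ω k / δ⌋ := by
  intro k n h
  by_contra hkn
  have hk₁ := Int.floor_le (ω k / δ)
  have hk₂ := Int.lt_floor_add_one (ω k / δ)
  have hn₁ := Int.floor_le (ω n / δ)
  have hn₂ := Int.lt_floor_add_one (ω n / δ)
  simp only at h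
  rw [h] at hk₁ hk₂
  have hlt : |ω k / δ - ω n / δ| < 1 := abs_sub_lt_iff.mpr ⟨by linarith, by linarith⟩
  rw [← sub_div, abs_div, abs_of_pos hδ, div_lt_one hδ] at hlt
  exact absurd (hsep k n hkn) (not_le.mpr hlt)

lemma finite_setOf_abs_sub_lt_of_separated (y r : ℝ) : {k | |ω k - y| < r}.Finite := by
  refine ((Set.finite_Icc ⌊(y - r) / δ⌋ ⌊(y + r) / δ⌋).preimage
    (injective_floor_div_of_separated hδ hsep).injOn).subset fun k hk => ?_
  obtain ⟨h1, h2⟩ := abs_lt.mp (show |ω k - y| < r from hk)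
  exact ⟨Int.floor_le_floor (div_le_div_of_nonneg_right (by linarith) hδ.le),
    Int.floor_le_floor (div_le_div_of_nonneg_right (by linarith) hδ.le)⟩

end Separated

section OrthogonalProjection

variable {𝕜 E : Type*} [RCLike 𝕜] [NormedAddCommGroup E] [InnerProductSpace 𝕜 E]
  {V : Submodule 𝕜 E} {P : E → E} (hP : ∀ f, P f ∈ V ∧ f - P f ∈ Vᗮ)
include hP

lemma apply_eq_self_of_isOrthogonalProjection {v : E} (hv : v ∈ V) : P v = v := by
  have hmem : v - P v ∈ V := V.sub_mem hv (hP v).1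
  have hzero := (Submodule.mem_orthogonal V _).mp (hP v).2 _ hmem
  rw [inner_self_eq_zero, sub_eq_zero] at hzero
  exact hzero.symm

lemma inner_apply_left_eq_right_of_isOrthogonalProjection (f g : E) :
    inner 𝕜 (P f) g = inner 𝕜 f (P g) := by
  have hf := (Submodule.mem_orthogonal V _).mp (hP g).2 (P f) (hP f).1
  have hg := (Submodule.mem_orthogonal' V _).mp (hP f).2 (P g) (hP g).1
  rw [inner_sub_right] at hf
  rw [inner_sub_left] at hg
  linear_combination hf - hg

end OrthogonalProjection

section Biorthogonal

variable {𝕜 E ι : Type*} [RCLike 𝕜] [NormedAddCommGroup E] [InnerProductSpace 𝕜 E]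
  [DecidableEq ι] {e φ : ι → E} (hbior : ∀ k n, inner 𝕜 (φ n) (e k) = if k = n then 1 else 0)
include hbior

lemma linearIndependent_of_biorthogonal : LinearIndependent 𝕜 e := by
  refine LinearIndependent.of_comp (LinearMap.pi fun n => innerₛₗ 𝕜 (φ n)) ?_
  have hcomp : (LinearMap.pi fun n => innerₛₗ 𝕜 (φ n)) ∘ e = fun k => Pi.single k 1 := by
    ext k n
    simp [hbior, Pi.single_apply, eq_comm]
  rw [hcomp]
  exact Pi.linearIndependent_single_one ι 𝕜

lemma trace_eq_sum_inner_of_biorthogonal [Fintype ι] {V : Submodule 𝕜 E}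
    (hV : Submodule.span 𝕜 (Set.range e) = V) (T : V →ₗ[𝕜] V) :
    LinearMap.trace 𝕜 V T =
      ∑ k, inner 𝕜 (φ k) (T ⟨e k, hV ▸ Submodule.subset_span (Set.mem_range_self k)⟩ : E) := by
  set B := (Module.Basis.span (linearIndependent_of_biorthogonal hbior)).map
    (LinearEquiv.ofEq _ _ hV)
  have hB (k : ι) : B k = ⟨e k, hV ▸ Submodule.subset_span (Set.mem_range_self k)⟩ := by
    ext
    simp [B, Module.Basis.span_apply]
  have hrepr (v : V) (k : ι) : B.repr v k = inner 𝕜 (φ k) (v : E) := by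
    conv_rhs => rw [← B.sum_repr v]
    simp [inner_sum, inner_smul_right, hB, hbior]
  rw [LinearMap.trace_eq_matrix_trace 𝕜 B, Matrix.trace]
  simp [LinearMap.toMatrix_apply, hrepr, hB]

end Biorthogonal

lemma natCard_setOf_exists_eq_and_of_injective {ι α : Type*} {ω : ι → α}
    (hω : Function.Injective ω) (p : α → Prop) :
    Nat.card {x | ∃ k, x = ω k ∧ p x} = Nat.card {k // p (ω k)} := by
  have himage : {x | ∃ k, x = ω k ∧ p x} = ω '' {k | p (ω k)} := by
    ext x
    constructor
    · rintro ⟨k, rfl, hk⟩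
      exact ⟨k, hk, rfl⟩
    · rintro ⟨k, hk, rfl⟩
      exact ⟨k, rfl, hk⟩
  rw [himage, Nat.card_image_of_injective hω]
  rfl

/-- The paper's inner product `(u, v)`, linear in `u`, is `⟪v, u⟫` in Mathlib's convention. -/
theorem stmt6_general
    (ω : ℤ → ℝ)
    (hgap : 0 < ⨅ p : {p : ℤ × ℤ // p.1 ≠ p.2}, |ω p.1.1 - ω p.1.2|)
    (a b : ℝ) (y r : ℝ)
    (e : ℤ → Lp H 2 (volume.restrict (Set.Ioo a b)))
    (φ : ℤ → Lp H 2 (volume.restrict (Set.Ioo a b)))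
    (hbior : ∀ k n : ℤ, (inner ℂ (φ n) (e k) : ℂ) = if k = n then 1 else 0)
    (V : Submodule ℂ (Lp H 2 (volume.restrict (Set.Ioo a b))))
    (hV : V = Submodule.span ℂ {f | ∃ k : ℤ, |ω k - y| < r ∧ f = e k})
    (P Q : Lp H 2 (volume.restrict (Set.Ioo a b)) →L[ℂ]
      Lp H 2 (volume.restrict (Set.Ioo a b)))
    (hP : ∀ f, P f ∈ V ∧ f - P f ∈ Vᗮ)
    (S : V →ₗ[ℂ] V)
    (hS : S = LinearMap.codRestrict V
      ((P.toLinearMap.comp Q.toLinearMap).comp V.subtype) (fun v => (hP _).1)) :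
    LinearMap.trace ℂ V S =
      (Nat.card {x : ℝ | ∃ k : ℤ, x = ω k ∧ |x - y| < r} : ℂ) +
        ∑' k : {k : ℤ // |ω k - y| < r},
          (inner ℂ (P (φ k)) (Q (e k) - e k) : ℂ) := by
  have hsep (k n : ℤ) (h : k ≠ n) := iInf_abs_sub_le (ω := ω) h
  have : Fintype {k : ℤ // |ω k - y| < r} :=
    (finite_setOf_abs_sub_lt_of_separated hgap hsep y r).fintype
  have hspan : Submodule.span ℂ (Set.range fun k : {k : ℤ // |ω k - y| < r} => e k) = V := by
    rw [hV]
    congr 1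
    ext f
    simp [eq_comm]
  have hdiag (k : ℤ) (hk : |ω k - y| < r) :
      inner ℂ (φ k) (P (Q (e k))) = 1 + inner ℂ (P (φ k)) (Q (e k) - e k) := by
    have hPe : P (e k) = e k := apply_eq_self_of_isOrthogonalProjection hP
      (hV ▸ Submodule.subset_span ⟨k, hk, rfl⟩)
    have hone : inner ℂ (P (φ k)) (e k) = 1 := by
      rw [inner_apply_left_eq_right_of_isOrthogonalProjection hP, hPe, hbior, if_pos rfl]
    rw [inner_sub_right, hone, ← inner_apply_left_eq_right_of_isOrthogonalProjection hP]
    ring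
  rw [trace_eq_sum_inner_of_biorthogonal (φ := fun k : {k : ℤ // |ω k - y| < r} => φ k)
      (fun k n => by simp [hbior, Subtype.ext_iff]) hspan, hS,
    natCard_setOf_exists_eq_and_of_injective (injective_of_separated hgap hsep), tsum_fintype,
    Nat.card_eq_fintype_card, ← Finset.card_univ, Finset.cast_card, ← Finset.sum_add_distrib]
  exact Finset.sum_congr rfl fun k _ => hdiag k k.2

/-- Trace formula: `tr S = Card Ω_r + Σ_{|ω_k - y| < r} ((Q_{r+R} - Id) e_k, P_r φ_k)`,
where `(φ_k)` is a bounded biorthogonal family to `(e_k)` in `L²(I,H)`.  (The inner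
product `(u, v)` of the paper, linear in `u`, is `⟪v, u⟫` in Mathlib's convention.) -/
theorem stmt6 [FiniteDimensional ℂ H] (d : ℕ) (hd : Module.finrank ℂ H = d)
    (ω : ℤ → ℝ)
    (hgap : 0 < ⨅ p : {p : ℤ × ℤ // p.1 ≠ p.2}, |ω p.1.1 - ω p.1.2|)
    (U : ℤ → H) (hU : ∀ k, ‖U k‖ = 1)
    (a b : ℝ) (hab : a < b) (y r R : ℝ) (hr : 0 < r) (hR : 0 < R)
    (e : ℤ → Lp H 2 (volume.restrict (Set.Ioo a b)))
    (he : ∀ k, e k = expLp a b (ω k) (U k))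
    (φ : ℤ → Lp H 2 (volume.restrict (Set.Ioo a b)))
    (hbior : ∀ k n : ℤ, (inner ℂ (φ n) (e k) : ℂ) = if k = n then 1 else 0)
    (hbdd : ∃ C : ℝ, ∀ k, ‖φ k‖ ≤ C)
    (V W : Submodule ℂ (Lp H 2 (volume.restrict (Set.Ioo a b))))
    (hV : V = Submodule.span ℂ {f | ∃ k : ℤ, |ω k - y| < r ∧ f = e k})
    (hW : W = Submodule.span ℂ
      {f | ∃ n : ℤ, ∃ u : H, |2 * Real.pi / (b - a) * n - y| < r + R ∧
        f = expLp a b (2 * Real.pi / (b - a) * n) u})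
    (P Q : Lp H 2 (volume.restrict (Set.Ioo a b)) →L[ℂ]
      Lp H 2 (volume.restrict (Set.Ioo a b)))
    (hP : ∀ f, P f ∈ V ∧ f - P f ∈ Vᗮ)
    (hQ : ∀ f, Q f ∈ W ∧ f - Q f ∈ Wᗮ)
    (S : V →ₗ[ℂ] V)
    (hS : S = LinearMap.codRestrict V
      ((P.toLinearMap.comp Q.toLinearMap).comp V.subtype) (fun v => (hP _).1)) :
    LinearMap.trace ℂ V S =
      (Nat.card {x : ℝ | ∃ k : ℤ, x = ω k ∧ |x - y| < r} : ℂ) +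
        ∑' k : {k : ℤ // |ω k - y| < r},
          (inner ℂ (P (φ k)) (Q (e k) - e k) : ℂ) :=
  stmt6_general ω hgap a b y r e φ hbior V hV P Q hP S hS
end
end

section
/- Let (ω_k)_{k∈ℤ} be a nondecreasing sequence of real numbers satisfying ω_{k+M} − ω_k ≥ Mγ' for all k ∈ ℤ (for some positive integer M and γ' > 0), let I = (a,b) be a bounded interval, γ_n := 2π|I|⁻¹ n, and let f_k = [ω_m, …, ω_k] be a divided difference function associated to a γ'-close exponent chain ω_m, …, ω_{m+j−1} of the sequence (m ≤ k ≤ m+j−1). Then there is a constant C depending only on γ', M and I such that for all n with γ_n ≠ ω_k, |∫_I f_k(t) e^{−iγ_n t} dt| ≤ C / |ω_k − γ_n|. -/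
open MeasureTheory Complex

noncomputable section

/-- The iterated integral `∫₀ᵘ e^{itd₁s₁} ∫₀^{s₁} e^{itd₂s₂} ⋯ ds₂ ds₁` appearing in the
divided differences of exponentials (Hermite–Genocchi formula). -/
def nestInt (t : ℝ) : List ℝ → ℝ → ℂ
  | [], _ => 1
  | d :: ds, u => ∫ s in (0:ℝ)..u, Complex.exp (Complex.I * t * d * s) * nestInt t ds s

/-- Consecutive differences `[μ₂ - μ₁, μ₃ - μ₂, …]` of a list `[μ₁, μ₂, …]`. -/
def consecDiffs : List ℝ → List ℝ
  | [] => []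
  | [_] => []
  | x :: y :: rest => (y - x) :: consecDiffs (y :: rest)

/-- The divided difference
`[μ₁,…,μ_r](t) = (it)^{r-1} ∫₀¹∫₀^{s₁}⋯∫₀^{s_{r-2}}
  exp(i[s_{r-1}(μ_r - μ_{r-1}) + ⋯ + s₁(μ₂ - μ₁) + μ₁]t) ds_{r-1}⋯ds₁`,
here defined via the equivalent iterated-integral (nested) form. -/
def divDiff (t : ℝ) : List ℝ → ℂ
  | [] => 0
  | m :: rest => (Complex.I * t) ^ rest.length * Complex.exp (Complex.I * m * t) *
      nestInt t (consecDiffs (m :: rest)) 1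

/-! The divided difference `f = [μ₀, …, μ_p]` of `μ ↦ exp (i μ t)` obeys the Leibniz rule
`f' = i μ_p f + i [μ₀, …, μ_{p-1}]`, so `f(t) exp(-i μ_p t)` has derivative
`i [μ₀, …, μ_{p-1}](t) exp(-i μ_p t)`. A divided difference with `p + 1` nodes is bounded
by `|t|^p` (Hermite–Genocchi), hence by `(1 + max |a| |b|)^M` on `I` as long as `p ≤ M`.
One integration by parts against `exp (i (μ_p - γ_n) t)` then gives the bound
`(2 + |I|)(1 + max |a| |b|)^M / |μ_p - γ_n|`.
The Leibniz rule at the last node follows from the one at the first node (immediate from the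
iterated integral) via the recurrence `(x - y)[y, ν, x] = [ν, x] - [y, ν]`. -/

lemma hasDerivAt_exp_mul_ofReal (c : ℂ) (t : ℝ) :
    HasDerivAt (fun s : ℝ => exp (c * s)) (c * exp (c * t)) t := by
  simpa [mul_comm] using ((hasDerivAt_id (t : ℂ)).const_mul c).cexp.comp_ofReal

lemma continuous_nestInt (t : ℝ) : ∀ ds : List ℝ, Continuous (nestInt t ds)
  | [] => continuous_const
  | d :: ds => by
    have hc : Continuous fun s : ℝ => exp (I * t * d * s) * nestInt t ds s :=
      (by fun_prop : Continuous fun s : ℝ => exp (I * t * d * s)).mul (continuous_nestInt t ds)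
    exact intervalIntegral.continuous_primitive (fun _ _ => hc.intervalIntegrable _ _) 0

lemma hasDerivAt_nestInt_cons (t d : ℝ) (ds : List ℝ) (u : ℝ) :
    HasDerivAt (nestInt t (d :: ds)) (exp (I * t * d * u) * nestInt t ds u) u := by
  have hc : Continuous fun s : ℝ => exp (I * t * d * s) * nestInt t ds s :=
    (by fun_prop : Continuous fun s : ℝ => exp (I * t * d * s)).mul (continuous_nestInt t ds)
  exact (hc.integral_hasStrictDerivAt 0 u).hasDerivAt

lemma norm_nestInt_le (t : ℝ) : ∀ (ds : List ℝ) (u : ℝ), ‖nestInt t ds u‖ ≤ |u| ^ ds.length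
  | [], u => by simp [nestInt]
  | d :: ds, u => by
    have hbound : ∀ s ∈ Set.uIoc 0 u,
        ‖exp (I * t * d * s) * nestInt t ds s‖ ≤ |u| ^ ds.length := by
      intro s hs
      rw [norm_mul, show ‖exp (I * t * d * s)‖ = 1 by simp [norm_exp], one_mul]
      have hsu : |s| ≤ |u| := by
        simpa using Set.abs_sub_left_of_mem_uIcc (Set.uIoc_subset_uIcc hs)
      exact (norm_nestInt_le t ds s).trans (pow_le_pow_left₀ (abs_nonneg s) hsu _)
    simpa [nestInt, pow_succ] using intervalIntegral.norm_integral_le_of_norm_le_const hbound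

lemma pow_mul_nestInt (t : ℝ) : ∀ (ds : List ℝ) (u : ℝ),
    (t : ℂ) ^ ds.length * nestInt t ds u = nestInt 1 ds (t * u)
  | [], u => by simp [nestInt]
  | d :: ds, u => by
    rcases eq_or_ne t 0 with rfl | ht
    · simp [nestInt]
    have hscale : ∀ s : ℝ, (t : ℂ) ^ ds.length * (exp (I * t * d * s) * nestInt t ds s)
        = exp (I * (1 : ℝ) * d * (t * s : ℝ)) * nestInt 1 ds (t * s) := by
      intro s
      rw [← pow_mul_nestInt t ds s]
      push_cast
      ring_nf
    calc (t : ℂ) ^ (d :: ds).length * nestInt t (d :: ds) u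
        = t * ∫ s in (0:ℝ)..u, (t : ℂ) ^ ds.length * (exp (I * t * d * s) * nestInt t ds s) := by
          rw [intervalIntegral.integral_const_mul, List.length_cons, pow_succ, nestInt]; ring
      _ = nestInt 1 (d :: ds) (t * u) := by
          simp only [hscale, nestInt]
          rw [intervalIntegral.integral_comp_mul_left
            (fun σ : ℝ => exp (I * (1 : ℝ) * d * σ) * nestInt 1 ds σ) ht, mul_zero,
            Complex.real_smul, ← mul_assoc, ofReal_inv, mul_inv_cancel₀ (ofReal_ne_zero.2 ht),
            one_mul]

lemma length_consecDiffs :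
    ∀ (y : ℝ) (rest : List ℝ), (consecDiffs (y :: rest)).length = rest.length
  | _, [] => rfl
  | _, z :: rest => by simp [consecDiffs, length_consecDiffs z rest]

lemma divDiff_singleton (t y : ℝ) : divDiff t [y] = exp (I * y * t) := by
  simp [divDiff, consecDiffs, nestInt]

lemma divDiff_zero_cons {rest : List ℝ} (hrest : rest ≠ []) (y : ℝ) :
    divDiff 0 (y :: rest) = 0 := by
  simp [divDiff, hrest]

lemma divDiff_cons_eq (t y : ℝ) (rest : List ℝ) :
    divDiff t (y :: rest) =
      I ^ rest.length * exp (I * y * t) * nestInt 1 (consecDiffs (y :: rest)) t := by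
  rw [divDiff, ← mul_one t, ← pow_mul_nestInt, length_consecDiffs, mul_one]
  ring

lemma norm_divDiff_le (t : ℝ) : ∀ μ : List ℝ, ‖divDiff t μ‖ ≤ |t| ^ (μ.length - 1)
  | [] => by simp [divDiff]
  | y :: rest => by
    have h := norm_nestInt_le t (consecDiffs (y :: rest)) 1
    rw [abs_one, one_pow] at h
    simpa [divDiff, norm_exp] using
      mul_le_mul_of_nonneg_left h (by positivity : 0 ≤ |t| ^ rest.length)

lemma hasDerivAt_divDiff_cons (y : ℝ) (rest : List ℝ) (t : ℝ) :
    HasDerivAt (fun s => divDiff s (y :: rest))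
      (I * y * divDiff t (y :: rest) + I * divDiff t rest) t := by
  have hexp := hasDerivAt_exp_mul_ofReal (I * y) t
  cases rest with
  | nil =>
    simp only [divDiff_singleton, show divDiff t [] = 0 from rfl, mul_zero, add_zero]
    exact hexp
  | cons z rest =>
    have hnest := hasDerivAt_nestInt_cons 1 (z - y) (consecDiffs (z :: rest)) t
    have hexp_add : exp (I * y * t) * exp (I * ((1 : ℝ) : ℂ) * ((z - y : ℝ) : ℂ) * t)
        = exp (I * z * t) := by
      rw [← Complex.exp_add]; push_cast; ring_nf
    simp only [divDiff_cons_eq, consecDiffs, List.length_cons]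
    refine ((hexp.const_mul (I ^ (rest.length + 1))).mul hnest).congr_deriv ?_
    linear_combination (I ^ (rest.length + 1) * nestInt 1 (consecDiffs (z :: rest)) t) * hexp_add

@[fun_prop]
lemma continuous_divDiff : ∀ μ : List ℝ, Continuous fun t => divDiff t μ
  | [] => continuous_const
  | y :: rest => continuous_iff_continuousAt.2 fun t =>
      (hasDerivAt_divDiff_cons y rest t).continuousAt

lemma eq_zero_of_hasDerivAt_mul_self {u : ℝ → ℂ} {c : ℂ} (hu : ∀ t, HasDerivAt u (c * u t) t)
    (h0 : u 0 = 0) (t : ℝ) : u t = 0 := by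
  have hconst : ∀ s : ℝ, HasDerivAt (fun s : ℝ => exp (-c * s) * u s) 0 s := fun s =>
    ((hasDerivAt_exp_mul_ofReal (-c) s).mul (hu s)).congr_deriv (by ring)
  have := is_const_of_deriv_eq_zero (fun s => (hconst s).differentiableAt)
    (fun s => (hconst s).deriv) t 0
  simpa [h0, Complex.exp_ne_zero] using this

lemma sub_mul_divDiff_cons_append {l : List ℝ} {x : ℝ}
    (hl : ∀ t, HasDerivAt (fun s => divDiff s (l ++ [x]))
      (I * x * divDiff t (l ++ [x]) + I * divDiff t l) t) (y t : ℝ) :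
    (x - y) * divDiff t (y :: (l ++ [x])) = divDiff t (l ++ [x]) - divDiff t (y :: l) := by
  -- the difference of the two sides solves `u' = i y u` with `u 0 = 0`
  rw [← sub_eq_zero]
  refine eq_zero_of_hasDerivAt_mul_self (c := I * y)
    (u := fun t =>
      (x - y) * divDiff t (y :: (l ++ [x])) - (divDiff t (l ++ [x]) - divDiff t (y :: l)))
    (fun s => ?_) ?_ t
  · refine (((hasDerivAt_divDiff_cons y (l ++ [x]) s).const_mul ((x : ℂ) - y)).sub
      ((hl s).sub (hasDerivAt_divDiff_cons y l s))).congr_deriv ?_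
    ring
  · cases l with
    | nil => simp [divDiff_singleton, divDiff_zero_cons]
    | cons z l => simp [divDiff_zero_cons]

lemma hasDerivAt_divDiff_append_singleton (x : ℝ) :
    ∀ (l : List ℝ) (t : ℝ), HasDerivAt (fun s => divDiff s (l ++ [x]))
      (I * x * divDiff t (l ++ [x]) + I * divDiff t l) t
  | [], t => by simpa using hasDerivAt_divDiff_cons x [] t
  | y :: l, t => by
    have hrec := sub_mul_divDiff_cons_append (hasDerivAt_divDiff_append_singleton x l) y t
    refine (hasDerivAt_divDiff_cons y (l ++ [x]) t).congr_deriv ?_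
    rw [List.cons_append]
    linear_combination -I * hrec

lemma hasDerivAt_divDiff_append_singleton_mul_exp (l : List ℝ) (x t : ℝ) :
    HasDerivAt (fun s => divDiff s (l ++ [x]) * exp (-I * x * s))
      (I * divDiff t l * exp (-I * x * t)) t := by
  exact ((hasDerivAt_divDiff_append_singleton x l t).mul
    (hasDerivAt_exp_mul_ofReal (-I * x) t)).congr_deriv (by ring)

lemma norm_integral_mul_exp_le {F G : ℝ → ℂ} {a b δ B : ℝ} (hab : a ≤ b) (hδ : δ ≠ 0)
    (hF : ∀ t, HasDerivAt F (G t) t) (hG : Continuous G)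
    (hFB : ∀ t ∈ Set.Icc a b, ‖F t‖ ≤ B) (hGB : ∀ t ∈ Set.Icc a b, ‖G t‖ ≤ B) :
    ‖∫ t in a..b, F t * exp (I * δ * t)‖ ≤ (2 + (b - a)) * B / |δ| := by
  have hIδ : I * δ ≠ 0 := mul_ne_zero I_ne_zero (ofReal_ne_zero.2 hδ)
  set e : ℝ → ℂ := fun t => exp (I * δ * t) / (I * δ)
  have he : ∀ t : ℝ, HasDerivAt e (exp (I * δ * t)) t := fun t => by
    simpa [e, hIδ] using (hasDerivAt_exp_mul_ofReal (I * δ) t).div_const (I * δ)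
  have hnorm_e : ∀ t : ℝ, ‖e t‖ = 1 / |δ| := fun t => by
    simp [e, norm_exp]
  have hparts := intervalIntegral.integral_mul_deriv_eq_deriv_mul (fun t _ => hF t)
    (fun t _ => he t) (hG.intervalIntegrable a b)
    ((by fun_prop : Continuous fun t : ℝ => exp (I * δ * t)).intervalIntegrable a b)
  have hGe : ‖∫ t in a..b, G t * e t‖ ≤ B * (1 / |δ|) * (b - a) := by
    have := intervalIntegral.norm_integral_le_of_norm_le_const (f := fun t => G t * e t)
      fun t ht => by
        rw [norm_mul, hnorm_e]
        exact mul_le_mul_of_nonneg_right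
          (hGB t (Set.Ioc_subset_Icc_self (Set.uIoc_of_le hab ▸ ht))) (by positivity)
    rwa [abs_of_nonneg (sub_nonneg.2 hab)] at this
  have hBa : ‖F a‖ ≤ B := hFB a (Set.left_mem_Icc.2 hab)
  have hBb : ‖F b‖ ≤ B := hFB b (Set.right_mem_Icc.2 hab)
  rw [hparts]
  calc ‖F b * e b - F a * e a - ∫ t in a..b, G t * e t‖
      ≤ ‖F b‖ * ‖e b‖ + ‖F a‖ * ‖e a‖ + ‖∫ t in a..b, G t * e t‖ := by
        grw [norm_sub_le, norm_sub_le, norm_mul, norm_mul]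
    _ ≤ B * (1 / |δ|) + B * (1 / |δ|) + B * (1 / |δ|) * (b - a) := by
        rw [hnorm_e, hnorm_e]; gcongr
    _ = (2 + (b - a)) * B / |δ| := by ring

theorem stmt14_general (ω : ℤ → ℝ)
    (M : ℕ) (γ' : ℝ)
    (a b : ℝ) (hab : a < b) :
    ∃ C : ℝ, 0 < C ∧
      ∀ (m : ℤ) (j : ℕ), 1 ≤ j → j ≤ M →
        γ' ≤ ω m - ω (m - 1) →
        (∀ i : ℕ, 1 ≤ i → i ≤ j - 1 → ω (m + i) - ω (m + i - 1) < γ') →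
        γ' ≤ ω (m + j) - ω (m + j - 1) →
        ∀ p : ℕ, p < j →
          ∀ n : ℤ, 2 * Real.pi / (b - a) * n ≠ ω (m + p) →
            ‖∫ t in Set.Ioo a b,
                divDiff t ((List.range (p + 1)).map (fun i => ω (m + i))) *
                  Complex.exp (-Complex.I * (2 * Real.pi / (b - a) * n) * t)‖ ≤
              C / |ω (m + p) - 2 * Real.pi / (b - a) * n| := by
  set B := (1 + max |a| |b|) ^ M
  refine ⟨(2 + (b - a)) * B, by positivity, fun m j _ hjM _ _ _ p hp n hne => ?_⟩
  set x := ω (m + p)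
  set l := (List.range p).map fun i : ℕ => ω (m + i)
  have hlist : (List.range (p + 1)).map (fun i => ω (m + i)) = l ++ [x] := by
    simp [l, x, List.range_succ, ← List.map_eq_flatMap]
  have hbound : ∀ μ : List ℝ, μ.length ≤ M + 1 → ∀ t ∈ Set.Icc a b, ‖divDiff t μ‖ ≤ B :=
    fun μ hμ t ht => calc
      ‖divDiff t μ‖ ≤ |t| ^ (μ.length - 1) := norm_divDiff_le t μ
      _ ≤ (1 + max |a| |b|) ^ (μ.length - 1) := by
        gcongr
        exact (abs_le_max_abs_abs ht.1 ht.2).trans (le_add_of_nonneg_left zero_le_one)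
      _ ≤ B := pow_le_pow_right₀ (le_add_of_nonneg_right (by positivity)) (by omega)
  have hintegrand : ∀ t : ℝ, divDiff t (l ++ [x]) * exp (-I * (2 * Real.pi / (b - a) * n) * t)
      = divDiff t (l ++ [x]) * exp (-I * x * t)
        * exp (I * (x - 2 * Real.pi / (b - a) * n : ℝ) * t) := fun t => by
    rw [mul_assoc _ (exp _), ← Complex.exp_add]; push_cast; ring_nf
  rw [← integral_Ioc_eq_integral_Ioo, ← intervalIntegral.integral_of_le hab.le, hlist]
  simp only [hintegrand]
  refine norm_integral_mul_exp_le hab.le (sub_ne_zero.2 hne.symm)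
    (hasDerivAt_divDiff_append_singleton_mul_exp l x) (by fun_prop) ?_ ?_
  · intro t ht
    simpa [Complex.norm_exp] using hbound (l ++ [x]) (by simp [l]; omega) t ht
  · intro t ht
    simpa [Complex.norm_exp] using hbound l (by simp [l]; omega) t ht

/-- Under the weakened gap condition `ω_{k+M} - ω_k ≥ Mγ'`, there is a constant `C`
(depending only on `γ'`, `M` and `I = (a,b)`) such that for every divided difference
`f_k = [ω_m, …, ω_k]` associated to a `γ'`-close exponent chain `ω_m, …, ω_{m+j-1}`
(with `k = m + p`, `p ≤ j-1`) and every `n` with `γ_n = 2πn/|I| ≠ ω_k`,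
`|∫_I f_k(t) e^{-iγ_n t} dt| ≤ C / |ω_k - γ_n|`. -/
theorem stmt14 (ω : ℤ → ℝ) (hmono : Monotone ω)
    (M : ℕ) (hM : 0 < M) (γ' : ℝ) (hγ' : 0 < γ')
    (hgap : ∀ k : ℤ, ω (k + M) - ω k ≥ M * γ')
    (a b : ℝ) (hab : a < b) :
    ∃ C : ℝ, 0 < C ∧
      ∀ (m : ℤ) (j : ℕ), 1 ≤ j → j ≤ M →
        γ' ≤ ω m - ω (m - 1) →
        (∀ i : ℕ, 1 ≤ i → i ≤ j - 1 → ω (m + i) - ω (m + i - 1) < γ') →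
        γ' ≤ ω (m + j) - ω (m + j - 1) →
        ∀ p : ℕ, p < j →
          ∀ n : ℤ, 2 * Real.pi / (b - a) * n ≠ ω (m + p) →
            ‖∫ t in Set.Ioo a b,
                divDiff t ((List.range (p + 1)).map (fun i => ω (m + i))) *
                  Complex.exp (-Complex.I * (2 * Real.pi / (b - a) * n) * t)‖ ≤
              C / |ω (m + p) - 2 * Real.pi / (b - a) * n| :=
  stmt14_general ω M γ' a b hab
end
end

section
/- For any real numbers μ₁, …, μ_r, the divided difference function [μ₁, …, μ_r](t) satisfies, for all t > 0, the derivative bound |[μ₁, …, μ_r]'(t)| ≤ (r−1) t^{r−2}/(r−1)! + (|μ_r − μ_{r−1}| + ⋯ + |μ₂ − μ₁| + |μ₁|) t^{r−1}/(r−1)!. -/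
/-!
Write `[μ₁,…,μ_r](t) = (it)^{r-1} e^{iμ₁t} N(t)`, where `N(t)` is the nested integral of
`exp(it Σ dⱼsⱼ)` over the simplex `1 ≥ s₁ ≥ ⋯ ≥ s_{r-1} ≥ 0` (volume `1/(r-1)!`) and the `dⱼ`
are the consecutive differences of the `μ`. Differentiating under the integral sign, the
integrand of `N'` is bounded by `|Σ dⱼsⱼ| ≤ Σ|dⱼ|`, so `|N| ≤ 1/(r-1)!` and
`|N'| ≤ Σ|dⱼ|/(r-1)!`; the product rule then gives the bound.
-/

open MeasureTheory Complex

noncomputable section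

open scoped Nat

def nestIntDeriv (t : ℝ) : List ℝ → ℝ → ℂ
  | [], _ => 0
  | d :: ds, u => ∫ s in (0:ℝ)..u,
      (exp (I * t * d * s) * (I * d * s) * nestInt t ds s +
        exp (I * t * d * s) * nestIntDeriv t ds s)

lemma continuous_nestInt_s15 (ds : List ℝ) : Continuous fun p : ℝ × ℝ => nestInt p.1 ds p.2 := by
  induction ds with
  | nil => exact continuous_const
  | cons d ds ih =>
    have hF : Continuous fun q : (ℝ × ℝ) × ℝ =>
        exp (I * q.1.1 * d * q.2) * nestInt q.1.1 ds q.2 :=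
      (by fun_prop : Continuous fun q : (ℝ × ℝ) × ℝ => exp (I * q.1.1 * d * q.2)).mul
        (ih.comp (continuous_fst.fst.prodMk continuous_snd))
    exact intervalIntegral.continuous_parametric_intervalIntegral_of_continuous hF continuous_snd

lemma continuous_nestIntDeriv (ds : List ℝ) :
    Continuous fun p : ℝ × ℝ => nestIntDeriv p.1 ds p.2 := by
  induction ds with
  | nil => exact continuous_const
  | cons d ds ih =>
    have hF : Continuous fun q : (ℝ × ℝ) × ℝ => exp (I * q.1.1 * d * q.2) * (I * d * q.2) *
        nestInt q.1.1 ds q.2 + exp (I * q.1.1 * d * q.2) * nestIntDeriv q.1.1 ds q.2 :=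
      have hq : Continuous fun q : (ℝ × ℝ) × ℝ => (q.1.1, q.2) :=
        continuous_fst.fst.prodMk continuous_snd
      ((by fun_prop : Continuous fun q : (ℝ × ℝ) × ℝ =>
          exp (I * q.1.1 * d * q.2) * (I * d * q.2)).mul ((continuous_nestInt_s15 ds).comp hq)).add
      ((by fun_prop : Continuous fun q : (ℝ × ℝ) × ℝ => exp (I * q.1.1 * d * q.2)).mul (ih.comp hq))
    exact intervalIntegral.continuous_parametric_intervalIntegral_of_continuous hF continuous_snd

lemma norm_integral_le_of_norm_le_mul_pow {E : Type*} [NormedAddCommGroup E] [NormedSpace ℝ E]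
    {f : ℝ → E} {u C : ℝ} (hu : 0 ≤ u) (k : ℕ) (hf : ∀ s ∈ Set.Ioc 0 u, ‖f s‖ ≤ C * s ^ k) :
    ‖∫ s in (0:ℝ)..u, f s‖ ≤ C * u ^ (k + 1) / (k + 1) := by
  refine (intervalIntegral.norm_integral_le_of_norm_le hu (ae_of_all _ hf)
    (Continuous.intervalIntegrable (by fun_prop) _ _)).trans_eq ?_
  simp [integral_pow, mul_div_assoc]

lemma norm_nestInt_le_s15 (t : ℝ) (ds : List ℝ) {u : ℝ} (hu : 0 ≤ u) :
    ‖nestInt t ds u‖ ≤ u ^ ds.length / ds.length ! := by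
  induction ds generalizing u with
  | nil => simp [nestInt]
  | cons d ds ih =>
    have hint : ∀ s ∈ Set.Ioc 0 u,
        ‖exp (I * t * d * s) * nestInt t ds s‖ ≤ (ds.length ! : ℝ)⁻¹ * s ^ ds.length := by
      intro s hs
      simpa [norm_exp, inv_mul_eq_div] using ih hs.1.le
    refine (norm_integral_le_of_norm_le_mul_pow hu _ hint).trans_eq ?_
    simp [Nat.factorial_succ]
    field_simp

lemma norm_nestIntDeriv_integrand_le (t d : ℝ) (ds : List ℝ) {s S : ℝ} (hs : 0 ≤ s)
    (hD : ‖nestIntDeriv t ds s‖ ≤ S * s ^ (ds.length + 1) / ds.length !) :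
    ‖exp (I * t * d * s) * (I * d * s) * nestInt t ds s +
        exp (I * t * d * s) * nestIntDeriv t ds s‖ ≤
      (|d| + S) / ds.length ! * s ^ (ds.length + 1) := by
  have hN := norm_nestInt_le_s15 t ds hs
  calc _ ≤ |d| * s * ‖nestInt t ds s‖ + ‖nestIntDeriv t ds s‖ := by
        refine (norm_add_le _ _).trans_eq ?_
        simp [norm_exp, abs_of_nonneg hs]
    _ ≤ |d| * s * (s ^ ds.length / ds.length !) + S * s ^ (ds.length + 1) / ds.length ! := by
        gcongr
    _ = _ := by ring

lemma norm_nestIntDeriv_le (t : ℝ) (ds : List ℝ) {u : ℝ} (hu : 0 ≤ u) :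
    ‖nestIntDeriv t ds u‖ ≤ (ds.map (|·|)).sum * u ^ (ds.length + 1) / ds.length ! := by
  induction ds generalizing u with
  | nil => simp [nestIntDeriv]
  | cons d ds ih =>
    set n := ds.length
    set S := (ds.map (|·|)).sum
    have hS : 0 ≤ S := List.sum_nonneg (by simp)
    refine (norm_integral_le_of_norm_le_mul_pow hu _
      fun s hs => norm_nestIntDeriv_integrand_le t d ds hs.1.le (ih hs.1.le)).trans ?_
    have hfac : ((n + 1) ! : ℝ) ≤ (n + 2) * n ! := by
      rw [Nat.factorial_succ]; push_cast; gcongr; linarith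
    simp only [List.map_cons, List.sum_cons, List.length_cons]
    rw [div_mul_eq_mul_div, div_div]
    refine div_le_div_of_nonneg_left (by positivity) (by positivity) ?_
    push_cast
    linarith

lemma hasDerivAt_nestInt (t : ℝ) (ds : List ℝ) {u : ℝ} (hu : 0 ≤ u) :
    HasDerivAt (fun τ => nestInt τ ds u) (nestIntDeriv t ds u) t := by
  induction ds generalizing t u with
  | nil => exact hasDerivAt_const t _
  | cons d ds ih =>
    have hF : ∀ τ : ℝ, Continuous fun s : ℝ => exp (I * τ * d * s) * nestInt τ ds s := fun τ =>
      (by fun_prop : Continuous fun s : ℝ => exp (I * τ * d * s)).mul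
        ((continuous_nestInt_s15 ds).comp (continuous_const.prodMk continuous_id))
    have hF' : Continuous fun s : ℝ => exp (I * t * d * s) * (I * d * s) * nestInt t ds s +
        exp (I * t * d * s) * nestIntDeriv t ds s :=
      have hs : Continuous fun s : ℝ => (t, s) := continuous_const.prodMk continuous_id
      ((by fun_prop : Continuous fun s : ℝ => exp (I * t * d * s) * (I * d * s)).mul
        ((continuous_nestInt_s15 ds).comp hs)).add
      ((by fun_prop : Continuous fun s : ℝ => exp (I * t * d * s)).mul
        ((continuous_nestIntDeriv ds).comp hs))
    have hexp : ∀ s τ : ℝ, HasDerivAt (fun τ : ℝ => exp (I * τ * d * s))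
        (exp (I * τ * d * s) * (I * d * s)) τ := fun s τ => by
      simpa using ((((hasDerivAt_id (τ : ℂ)).const_mul I).mul_const (d : ℂ)).mul_const
        (s : ℂ)).cexp.comp_ofReal
    have hbound : ∀ s ∈ Set.uIoc 0 u, ∀ τ : ℝ, τ ∈ Set.univ →
        ‖exp (I * τ * d * s) * (I * d * s) * nestInt τ ds s +
          exp (I * τ * d * s) * nestIntDeriv τ ds s‖
        ≤ (|d| + (ds.map (|·|)).sum) / ds.length ! * s ^ (ds.length + 1) := by
      intro s hs τ _
      rw [Set.uIoc_of_le hu] at hs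
      exact norm_nestIntDeriv_integrand_le τ d ds hs.1.le (norm_nestIntDeriv_le τ ds hs.1.le)
    exact (intervalIntegral.hasDerivAt_integral_of_dominated_loc_of_deriv_le Filter.univ_mem
      (.of_forall fun τ => (hF τ).aestronglyMeasurable) ((hF t).intervalIntegrable _ _)
      hF'.aestronglyMeasurable (ae_of_all _ hbound)
      (Continuous.intervalIntegrable (by fun_prop) _ _)
      (ae_of_all _ fun s hs τ _ => (hexp s τ).mul (ih τ (Set.uIoc_of_le hu ▸ hs).1.le))).2

lemma length_consecDiffs_cons (m : ℝ) (l : List ℝ) :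
    (consecDiffs (m :: l)).length = l.length := by
  induction l generalizing m with
  | nil => rfl
  | cons y l ih => simp [consecDiffs, ih]

lemma consecDiffs_map_range (μ : ℕ → ℝ) (n : ℕ) :
    consecDiffs ((List.range (n + 1)).map μ) = (List.range n).map fun i => μ (i + 1) - μ i := by
  induction n generalizing μ with
  | zero => rfl
  | succ n ih =>
    simpa [List.range_succ_eq_map, consecDiffs, Function.comp_def] using ih (μ ∘ Nat.succ)

theorem norm_deriv_divDiff_cons_le (m : ℝ) (l : List ℝ) (t : ℝ) :
    ‖deriv (fun s => divDiff s (m :: l)) t‖ ≤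
      l.length * |t| ^ (l.length - 1) / l.length ! +
        (((consecDiffs (m :: l)).map (|·|)).sum + |m|) * |t| ^ l.length / l.length ! := by
  set n := l.length
  set L := consecDiffs (m :: l)
  have hL : L.length = n := length_consecDiffs_cons m l
  have hpow : HasDerivAt (fun s : ℝ => (I * s) ^ n) (n * (I * t) ^ (n - 1) * I) t := by
    simpa using (((hasDerivAt_id (t : ℂ)).const_mul I).pow n).comp_ofReal
  have hexp : HasDerivAt (fun s : ℝ => exp (I * m * s)) (exp (I * m * t) * (I * m)) t := by
    simpa using ((hasDerivAt_id (t : ℂ)).const_mul (I * m)).cexp.comp_ofReal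
  have hderiv : HasDerivAt (fun s => divDiff s (m :: l)) _ t :=
    (hpow.mul hexp).mul (hasDerivAt_nestInt t L zero_le_one)
  rw [hderiv.deriv]
  have hN := norm_nestInt_le_s15 t L zero_le_one
  have hN' := norm_nestIntDeriv_le t L zero_le_one
  rw [hL, one_pow] at hN
  rw [hL, one_pow, mul_one] at hN'
  calc _ ≤ (n * |t| ^ (n - 1) + |t| ^ n * |m|) * ‖nestInt t L 1‖ +
        |t| ^ n * ‖nestIntDeriv t L 1‖ := by
        refine (norm_add_le _ _).trans ?_
        rw [norm_mul, norm_mul _ (nestIntDeriv t L 1)]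
        gcongr
        · refine (norm_add_le _ _).trans_eq ?_
          simp [norm_exp]
        · simp [norm_exp]
    _ ≤ (n * |t| ^ (n - 1) + |t| ^ n * |m|) * (1 / n !) +
        |t| ^ n * ((L.map (|·|)).sum / n !) := by gcongr
    _ = _ := by ring

theorem stmt15_general (r : ℕ) (μ : ℕ → ℝ) (t : ℝ) (ht : 0 < t) :
    ‖deriv (fun s : ℝ => divDiff s ((List.range r).map μ)) t‖ ≤
      ((r - 1 : ℕ) : ℝ) * t ^ (r - 2) / (Nat.factorial (r - 1)) +
        ((∑ i ∈ Finset.range (r - 1), |μ (i + 1) - μ i|) + |μ 0|) *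
          t ^ (r - 1) / (Nat.factorial (r - 1)) := by
  cases r with
  | zero => simp [divDiff]
  | succ n =>
    have hμ : (List.range (n + 1)).map μ = μ 0 :: (List.range n).map fun i => μ (i + 1) := by
      simp [List.range_succ_eq_map, Function.comp_def]
    have hbound := norm_deriv_divDiff_cons_le (μ 0) ((List.range n).map fun i => μ (i + 1)) t
    have hsum : ((List.range n).map fun i => |μ (i + 1) - μ i|).sum =
        ∑ i ∈ Finset.range n, |μ (i + 1) - μ i| := rfl
    rw [← hμ, consecDiffs_map_range, List.map_map, Function.comp_def, hsum] at hbound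
    simpa [abs_of_pos ht, Nat.add_sub_add_right n 1 1] using hbound

/-- Derivative bound for divided differences: for `t > 0`,
`|[μ₁,…,μ_r]'(t)| ≤ (r-1)t^{r-2}/(r-1)! + (|μ_r - μ_{r-1}| + ⋯ + |μ₂ - μ₁| + |μ₁|) t^{r-1}/(r-1)!`
(here `μ i` denotes `μ_{i+1}`, `i = 0,…,r-1`). -/
theorem stmt15 (r : ℕ) (hr : 1 ≤ r) (μ : ℕ → ℝ) (t : ℝ) (ht : 0 < t) :
    ‖deriv (fun s : ℝ => divDiff s ((List.range r).map μ)) t‖ ≤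
      ((r - 1 : ℕ) : ℝ) * t ^ (r - 2) / (Nat.factorial (r - 1)) +
        ((∑ i ∈ Finset.range (r - 1), |μ (i + 1) - μ i|) + |μ 0|) *
          t ^ (r - 1) / (Nat.factorial (r - 1)) :=
  stmt15_general r μ t ht
end
end

section
/- Let I be a bounded interval, γ_n := 2π|I|⁻¹ n, y ∈ ℝ, r > 0, R > 0, and let ω be a real number with |ω − y| < r. Then Σ_{n∈ℤ, |γ_n − y| ≥ r+R} 1/|ω − γ_n|² ≤ 2 Σ_{n=0}^{∞} 1/(2π|I|⁻¹ n + R)², and the right-hand side is O(1/R) as R → ∞, uniformly in y, r and ω. -/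
/-!
Every lattice point `a n` (`a = 2π/|I|`) with `|a n - y| ≥ r + R` lies at distance at least
`R` from `ω`, on one side of it. On either side the `k`-th such point, counted outwards from
`ω`, is at distance at least `a k + R`, so each side contributes at most `∑ₖ 1/(a k + R)²`.
This series is at most `1/R² + 1/(aR)`: its terms with `k ≥ 1` are dominated by the
telescoping differences `(1/(a (k - 1) + R) - 1/(a k + R))/a`.
-/

section Series

variable {a R : ℝ}

lemma one_div_add_sq_le_div {x : ℝ} (ha : 0 < a) (hx : 0 < x) :
    1 / (x + a) ^ 2 ≤ (1 / x - 1 / (x + a)) / a := by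
  have hxa : 0 < x + a := by linarith
  have h : (1 / x - 1 / (x + a)) / a = 1 / (x * (x + a)) := by
    field_simp
    ring
  rw [h, sq]
  gcongr
  linarith

lemma sum_range_one_div_mul_succ_add_sq_le (ha : 0 < a) (hR : 0 < R) (n : ℕ) :
    ∑ i ∈ Finset.range n, 1 / (a * ↑(i + 1) + R) ^ 2 ≤ 1 / (a * R) := by
  set g : ℕ → ℝ := fun i => 1 / (a * i + R)
  have hterm (i : ℕ) : 1 / (a * ↑(i + 1) + R) ^ 2 ≤ (g i - g (i + 1)) / a := by
    have h := one_div_add_sq_le_div ha (by positivity : 0 < a * i + R)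
    simp only [g]
    push_cast
    convert h using 3 <;> ring
  calc ∑ i ∈ Finset.range n, 1 / (a * ↑(i + 1) + R) ^ 2
      ≤ ∑ i ∈ Finset.range n, (g i - g (i + 1)) / a := Finset.sum_le_sum fun i _ => hterm i
    _ = (g 0 - g n) / a := by rw [← Finset.sum_div, Finset.sum_range_sub']
    _ ≤ g 0 / a := by gcongr; exact sub_le_self _ (by positivity)
    _ = 1 / (a * R) := by simp only [g, Nat.cast_zero, mul_zero, zero_add, div_div, mul_comm R a]

lemma summable_one_div_mul_add_sq (ha : 0 < a) (hR : 0 < R) :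
    Summable fun n : ℕ => 1 / (a * n + R) ^ 2 :=
  (summable_nat_add_iff 1).mp <| summable_of_sum_range_le (fun _ => by positivity)
    (sum_range_one_div_mul_succ_add_sq_le ha hR)

lemma tsum_one_div_mul_add_sq_le (ha : 0 < a) (hR : 0 < R) :
    ∑' n : ℕ, 1 / (a * n + R) ^ 2 ≤ 1 / R ^ 2 + 1 / (a * R) := by
  rw [(summable_one_div_mul_add_sq ha hR).tsum_eq_zero_add]
  gcongr
  · simp
  · exact Real.tsum_le_of_sum_range_le (fun _ => by positivity)
      (sum_range_one_div_mul_succ_add_sq_le ha hR)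

lemma tsum_one_div_mul_add_sq_le_div (ha : 0 < a) (hR : 1 ≤ R) :
    ∑' n : ℕ, 1 / (a * n + R) ^ 2 ≤ (1 + 1 / a) / R := by
  have hR0 : 0 < R := by linarith
  calc ∑' n : ℕ, 1 / (a * n + R) ^ 2 ≤ 1 / R ^ 2 + 1 / (a * R) :=
        tsum_one_div_mul_add_sq_le ha hR0
    _ ≤ 1 / R + 1 / (a * R) := by gcongr; nlinarith
    _ = (1 + 1 / a) / R := by field_simp

end Series

section Lattice

variable {a b ω R : ℝ}

lemma ceil_div_le_of_le_mul (ha : 0 < a) {n : ℤ} (hn : b ≤ a * n) : ⌈b / a⌉ ≤ n :=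
  Int.ceil_le.mpr <| (div_le_iff₀ ha).mpr (by linarith)

lemma one_div_sq_abs_sub_mul_le (ha : 0 < a) (hR : 0 < R) (hb : ω + R ≤ b) {n : ℤ}
    (hn : b ≤ a * n) : 1 / |ω - a * n| ^ 2 ≤ 1 / (a * (n - ⌈b / a⌉).toNat + R) ^ 2 := by
  have hb' : b ≤ a * ⌈b / a⌉ := by
    have := Int.le_ceil (b / a)
    rwa [div_le_iff₀ ha, mul_comm] at this
  have hcast : ((n - ⌈b / a⌉).toNat : ℝ) = n - ⌈b / a⌉ := by
    exact_mod_cast Int.toNat_of_nonneg (sub_nonneg.mpr (ceil_div_le_of_le_mul ha hn))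
  have hdist : a * (n - ⌈b / a⌉).toNat + R ≤ |ω - a * n| := by
    rw [hcast, abs_sub_comm]
    exact le_trans (by linarith) (le_abs_self _)
  gcongr

lemma injective_toNat_sub_ceil_div (ha : 0 < a) :
    Function.Injective fun n : {n : ℤ // b ≤ a * n} => (n - ⌈b / a⌉).toNat := by
  rintro ⟨n, hn⟩ ⟨m, hm⟩ h
  have := ceil_div_le_of_le_mul ha hn
  have := ceil_div_le_of_le_mul ha hm
  simp only at h
  exact Subtype.ext (show n = m by omega)

lemma summable_one_div_sq_abs_sub_mul_of_le (ha : 0 < a) (hR : 0 < R) (hb : ω + R ≤ b) :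
    Summable fun n : {n : ℤ // b ≤ a * n} => 1 / |ω - a * n| ^ 2 :=
  Summable.of_nonneg_of_le (fun _ => by positivity)
    (fun n => one_div_sq_abs_sub_mul_le ha hR hb n.2)
    ((summable_one_div_mul_add_sq ha hR).comp_injective (injective_toNat_sub_ceil_div ha))

lemma tsum_one_div_sq_abs_sub_mul_of_le_le (ha : 0 < a) (hR : 0 < R) (hb : ω + R ≤ b) :
    ∑' n : {n : ℤ // b ≤ a * n}, 1 / |ω - a * n| ^ 2 ≤ ∑' k : ℕ, 1 / (a * k + R) ^ 2 :=
  (summable_one_div_sq_abs_sub_mul_of_le ha hR hb).tsum_le_tsum_of_inj _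
    (injective_toNat_sub_ceil_div ha) (fun _ _ => by positivity)
    (fun n => one_div_sq_abs_sub_mul_le ha hR hb n.2) (summable_one_div_mul_add_sq ha hR)

def negLatticeEquiv (a b : ℝ) : {n : ℤ // a * n ≤ b} ≃ {n : ℤ // -b ≤ a * n} :=
  (Equiv.neg ℤ).subtypeEquiv fun n => by simp

lemma one_div_sq_abs_sub_mul_neg (a ω : ℝ) (n : ℤ) :
    1 / |-ω - a * ↑(-n)| ^ 2 = 1 / |ω - a * n| ^ 2 := by
  rw [← abs_neg]; push_cast; ring_nf

lemma summable_one_div_sq_abs_sub_mul_of_mul_le (ha : 0 < a) (hR : 0 < R) (hb : b + R ≤ ω) :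
    Summable fun n : {n : ℤ // a * n ≤ b} => 1 / |ω - a * n| ^ 2 :=
  ((negLatticeEquiv a b).summable_iff.mpr
    (summable_one_div_sq_abs_sub_mul_of_le (ω := -ω) ha hR (by linarith))).congr
    fun n => one_div_sq_abs_sub_mul_neg a ω n

lemma tsum_one_div_sq_abs_sub_mul_of_mul_le_le (ha : 0 < a) (hR : 0 < R) (hb : b + R ≤ ω) :
    ∑' n : {n : ℤ // a * n ≤ b}, 1 / |ω - a * n| ^ 2 ≤
      ∑' k : ℕ, 1 / (a * k + R) ^ 2 := by
  have h := tsum_one_div_sq_abs_sub_mul_of_le_le (ω := -ω) (b := -b) ha hR (by linarith)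
  rw [← (negLatticeEquiv a b).tsum_eq] at h
  refine le_of_eq_of_le (tsum_congr fun n : {n : ℤ // a * n ≤ b} => ?_) h
  exact (one_div_sq_abs_sub_mul_neg a ω n).symm

lemma tsum_one_div_sq_abs_sub_mul_le_two_mul {y r : ℝ} (ha : 0 < a) (hR : 0 < R)
    (hω : |ω - y| < r) :
    ∑' n : {n : ℤ // r + R ≤ |a * n - y|}, 1 / |ω - a * n| ^ 2 ≤
      2 * ∑' k : ℕ, 1 / (a * k + R) ^ 2 := by
  obtain ⟨hω₁, hω₂⟩ := abs_sub_lt_iff.mp hω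
  set above : Set ℤ := {n | y + (r + R) ≤ a * n}
  set below : Set ℤ := {n | a * n ≤ y - (r + R)}
  have hsplit (n : ℤ) : r + R ≤ |a * n - y| ↔ n ∈ above ∪ below := by
    simp only [above, below, Set.mem_union, Set.mem_ofPred_eq, le_abs]
    constructor <;> rintro (h | h) <;> [left; right; left; right] <;> linarith
  have hdisj : Disjoint above below :=
    Set.disjoint_left.mpr fun n h₁ h₂ => by
      simp only [above, below, Set.mem_ofPred_eq] at h₁ h₂
      linarith
  calc ∑' n : {n : ℤ // r + R ≤ |a * n - y|}, 1 / |ω - a * n| ^ 2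
      = ∑' n : ↑(above ∪ below), 1 / |ω - a * (n : ℤ)| ^ 2 :=
        (Equiv.subtypeEquivRight hsplit).tsum_eq fun n => 1 / |ω - a * (n : ℤ)| ^ 2
    _ = ∑' n : above, 1 / |ω - a * (n : ℤ)| ^ 2 +
          ∑' n : below, 1 / |ω - a * (n : ℤ)| ^ 2 :=
        Summable.tsum_union_disjoint (f := fun n : ℤ => 1 / |ω - a * n| ^ 2) hdisj
          (summable_one_div_sq_abs_sub_mul_of_le ha hR (by linarith))
          (summable_one_div_sq_abs_sub_mul_of_mul_le ha hR (by linarith))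
    _ ≤ ∑' k : ℕ, 1 / (a * k + R) ^ 2 + ∑' k : ℕ, 1 / (a * k + R) ^ 2 :=
        add_le_add (tsum_one_div_sq_abs_sub_mul_of_le_le ha hR (by linarith))
          (tsum_one_div_sq_abs_sub_mul_of_mul_le_le ha hR (by linarith))
    _ = 2 * ∑' k : ℕ, 1 / (a * k + R) ^ 2 := (two_mul _).symm

end Lattice

/-- With `γ_n = 2πn/|I|`: for `|ω - y| < r`,
`Σ_{|γ_n - y| ≥ r+R} 1/|ω - γ_n|² ≤ 2 Σ_{n≥0} 1/(2π|I|⁻¹n + R)²`, and the right-hand side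
is `O(1/R)` as `R → ∞`, uniformly in `y`, `r` and `ω`. -/
theorem stmt17 (L : ℝ) (hL : 0 < L) :
    (∀ y r R ωv : ℝ, 0 < r → 0 < R → |ωv - y| < r →
      (∑' n : {n : ℤ // r + R ≤ |2 * Real.pi / L * n - y|},
          1 / |ωv - 2 * Real.pi / L * (n : ℤ)| ^ 2) ≤
        2 * ∑' n : ℕ, 1 / (2 * Real.pi / L * n + R) ^ 2) ∧
    ∃ C : ℝ, 0 < C ∧ ∃ R₀ : ℝ, 0 < R₀ ∧ ∀ R : ℝ, R₀ ≤ R →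
      2 * (∑' n : ℕ, 1 / (2 * Real.pi / L * n + R) ^ 2) ≤ C / R := by
  set a := 2 * Real.pi / L
  have ha : 0 < a := by positivity
  refine ⟨fun y r R ω _ hR hω => tsum_one_div_sq_abs_sub_mul_le_two_mul ha hR hω,
    2 * (1 + 1 / a), by positivity, 1, one_pos, fun R hR => ?_⟩
  calc 2 * ∑' n : ℕ, 1 / (a * n + R) ^ 2 ≤ 2 * ((1 + 1 / a) / R) := by
        gcongr
        exact tsum_one_div_mul_add_sq_le_div ha hR
    _ = 2 * (1 + 1 / a) / R := (mul_div_assoc _ _ _).symm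
end
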